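/- Corollary of monotonic decrease: under the modification hypotheses (pre(a) ⊆ pre(a'), add(a') ⊆ add(a), del(a) ⊆ del(a') for each action), if the modified task P' is solvable then the original task P is solvable; equivalently, if P is unsolvable then P' is unsolvable. -/
import Mathlib


/-- A STRIPS action over fluent type `F`. -/
structure SAction (F : Type*) where
  pre : Set F
  add : Set F
  del : Set F

variable {F : Type*}

/-- `a` is applicable in state `s`. -/
def applicable (s : Set F) (a : SAction F) : Prop := a.pre ⊆ s

/-- Successor state `γ(s,a)`. -/
def step (s : Set F) (a : SAction F) : Set F := (s \ a.del) ∪ a.add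

/-- Applicability of an action sequence from a state. -/
def seqApp : Set F → List (SAction F) → Prop
  | _, [] => True
  | s, a :: rest => a.pre ⊆ s ∧ seqApp (step s a) rest

/-- Final state `Γ(s,π)` of applying a sequence. -/
def result : Set F → List (SAction F) → Set F
  | s, [] => s
  | s, a :: rest => result (step s a) rest

/-- The allowed modification relation: add preconditions, remove add
effects, add delete effects. -/
def mods (a a' : SAction F) : Prop :=
  a.pre ⊆ a'.pre ∧ a'.add ⊆ a.add ∧ a.del ⊆ a'.del

/-- `π` is a plan for the task with action set `A`, initial state `I`, goal `G`. -/
def isPlan (A : Set (SAction F)) (I G : Set F) (π : List (SAction F)) : Prop :=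
  (∀ a ∈ π, a ∈ A) ∧ seqApp I π ∧ G ⊆ result I π

/-- The task `⟨F, A, I, G⟩` is solvable. -/
def Solvable (A : Set (SAction F)) (I G : Set F) : Prop :=
  ∃ π : List (SAction F), isPlan A I G π

/-- The sequence of states traversed by `π` from `s`. -/
def stateSeq : Set F → List (SAction F) → List (Set F)
  | s, [] => [s]
  | s, a :: rest => s :: stateSeq (step s a) rest


lemma key_lemma {F : Type*} (A : Set (SAction F)) :
    ∀ (π' : List (SAction F)) (s s' : Set F), s' ⊆ s →
    (∀ a' ∈ π', ∃ a ∈ A, mods a a') → seqApp s' π' →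
    ∃ π : List (SAction F), (∀ a ∈ π, a ∈ A) ∧ seqApp s π ∧
      result s' π' ⊆ result s π := by
  intro π'
  induction π' with
  | nil => intro s s' hss _ _; exact ⟨[], by simp, trivial, hss⟩
  | cons a' rest ih =>
    intro s s' hss hmem happ
    obtain ⟨a, haA, hpre, hadd, hdel⟩ := hmem a' (by simp)
    have hstep : step s' a' ⊆ step s a := by
      intro x hx
      rcases hx with hx | hx
      · exact Or.inl ⟨hss hx.1, fun h => hx.2 (hdel h)⟩
      · exact Or.inr (hadd hx)
    obtain ⟨π, hπA, hπapp, hπres⟩ := ih (step s a) (step s' a') hstep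
      (fun b hb => hmem b (by simp [hb])) happ.2
    exact ⟨a :: π, by intro b hb; rcases List.mem_cons.mp hb with rfl | hb; exacts [haA, hπA b hb],
      ⟨hpre.trans (happ.1.trans hss), hπapp⟩, hπres⟩

/-- if the modified task is solvable then the original task is
solvable; equivalently, unsolvability is preserved by the modifications. -/
theorem solvable_of_modified_solvable
    (A : Set (SAction F)) (I G : Set F) (f : SAction F → SAction F)
    (hmods : ∀ a ∈ A, mods a (f a)) :
    (Solvable (f '' A) I G → Solvable A I G) ∧
    (¬ Solvable A I G → ¬ Solvable (f '' A) I G) := by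
  have main : Solvable (f '' A) I G → Solvable A I G := by
    rintro ⟨π', hπ'A, happ, hG⟩
    obtain ⟨π, h1, h2, h3⟩ := key_lemma A π' I I (le_refl I)
      (fun a' ha' => by
        obtain ⟨a, haA, rfl⟩ := hπ'A a' ha'
        exact ⟨a, haA, hmods a haA⟩) happ
    exact ⟨π, h1, h2, hG.trans h3⟩
  exact ⟨main, fun h hs => h (main hs)⟩
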